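/- Let k ≥ 3 be an integer, A = K[X]/(X^k), and let V ⊆ A be the non-unital commutative associative algebra consisting of the classes of polynomials with zero constant term (i.e. V = tA where t is the class of X). Regarding V as a Jordan algebra with its own multiplication, the K-span in End_K(V) of the operators D_{f,g} (f, g ∈ V) is strictly contained in the K-span of the multiplication operators L_f (f ∈ V); in particular, every D_{f,g} equals 2L_{fg}, yet L_t does not lie in the span of the operators D_{f,g}. -/
import Mathlib


set_option maxHeartbeats 1000000
set_option synthInstance.maxHeartbeats 400000

/-- The Jordan triple product `{x,y,z} = 2((xy)z + x(yz) - y(xz))`. -/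
def triple {K V : Type*} [Field K] [AddCommGroup V] [Module K V]
    (m : V →ₗ[K] V →ₗ[K] V) (x y z : V) : V :=
  2 • (m (m x y) z + m x (m y z) - m y (m x z))

/-- The operator `D_{x,y} = 2 L_{xy} + 2[L_x, L_y]`, satisfying `D_{x,y} z = {x,y,z}`. -/
def Dop {K V : Type*} [Field K] [AddCommGroup V] [Module K V]
    (m : V →ₗ[K] V →ₗ[K] V) (x y : V) : Module.End K V :=
  2 • (m (m x y) : Module.End K V) + 2 • ⁅(m x : Module.End K V), (m y : Module.End K V)⁆

/-- The multiplication of an ideal `I` of a commutative `K`-algebra `A`, viewed as a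
`K`-bilinear map on `I`; its partial applications are the multiplication operators `L_f`. -/
noncomputable def mI {K : Type*} [Field K] {A : Type*} [CommRing A] [Algebra K A]
    (I : Ideal A) :
    (I.restrictScalars K) →ₗ[K] (I.restrictScalars K) →ₗ[K] (I.restrictScalars K) where
  toFun f :=
    { toFun := fun g => ⟨f.1 * g.1, Ideal.mul_mem_left I f.1 g.2⟩
      map_add' := fun a b => Subtype.ext (mul_add f.1 a.1 b.1)
      map_smul' := fun c a => Subtype.ext (mul_smul_comm c f.1 a.1) }
  map_add' := fun a b => LinearMap.ext fun g => Subtype.ext (add_mul a.1 b.1 g.1)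
  map_smul' := fun c a => LinearMap.ext fun g => Subtype.ext (smul_mul_assoc c a.1 g.1)

/-- The algebra `A = K[X]/(X^k)`. -/
abbrev Aq (K : Type*) [Field K] (k : ℕ) : Type _ :=
  Polynomial K ⧸ Ideal.span {(Polynomial.X : Polynomial K) ^ k}

/-- The class `t` of `X` in `K[X]/(X^k)`. -/
noncomputable abbrev tq (K : Type*) [Field K] (k : ℕ) : Aq K k :=
  Ideal.Quotient.mk _ Polynomial.X

/-- The non-unital commutative associative algebra `V = tA ⊆ A = K[X]/(X^k)`, the classes
of polynomials with zero constant term, as a `K`-module. -/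
noncomputable abbrev Vmod (K : Type*) [Field K] (k : ℕ) : Submodule K (Aq K k) :=
  (Ideal.span {tq K k}).restrictScalars K

/-- The multiplication of `V = tA`, as a `K`-bilinear map. -/
noncomputable abbrev mV (K : Type*) [Field K] (k : ℕ) :
    Vmod K k →ₗ[K] Vmod K k →ₗ[K] Vmod K k :=
  mI (K := K) (Ideal.span {tq K k})

-- AUX: values of mV
lemma mV_val (K : Type*) [Field K] (k : ℕ) (f g : Vmod K k) :
    (mV K k f g).1 = f.1 * g.1 := rfl

noncomputable abbrev tVel (K : Type*) [Field K] (k : ℕ) : Vmod K k :=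
  ⟨tq K k, Ideal.subset_span rfl⟩

lemma key1 (K : Type*) [Field K] (k : ℕ) (f g : Vmod K k) :
    Dop (mV K k) f g = (2 : K) • (mV K k (mV K k f g) : Module.End K (Vmod K k)) := by
  apply LinearMap.ext; intro z
  have hc : (mV K k f) ((mV K k g) z) = (mV K k g) ((mV K k f) z) :=
    Subtype.ext (mul_left_comm f.1 g.1 z.1)
  simp only [Dop, LinearMap.add_apply, LinearMap.smul_apply, Ring.lie_def,
    LinearMap.sub_apply, Module.End.mul_apply, hc, sub_self, smul_zero, add_zero]
  rw [two_smul, two_smul K]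

lemma not_dvd (K : Type*) [Field K] (k : ℕ) (hk : 3 ≤ k) :
    ¬ (tq K k) ^ 3 ∣ (tq K k) ^ 2 := by
  rintro ⟨c, hc⟩
  obtain ⟨p, rfl⟩ := Ideal.Quotient.mk_surjective c
  have h0 : (Ideal.Quotient.mk (Ideal.span {(Polynomial.X : Polynomial K) ^ k}))
      (Polynomial.X ^ 2 - Polynomial.X ^ 3 * p) = 0 := by
    rw [map_sub, map_mul, map_pow, map_pow, ← hc, sub_self]
  rw [Ideal.Quotient.eq_zero_iff_mem, Ideal.mem_span_singleton] at h0
  have hco : ((Polynomial.X : Polynomial K) ^ 2 - Polynomial.X ^ 3 * p).coeff 2 = 0 :=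
    (Polynomial.X_pow_dvd_iff.mp h0) 2 (by omega)
  have h3p : ((Polynomial.X : Polynomial K) ^ 3 * p).coeff 2 = 0 :=
    (Polynomial.X_pow_dvd_iff.mp (dvd_mul_right _ p)) 2 (by omega)
  rw [Polynomial.coeff_sub, h3p, sub_zero, Polynomial.coeff_X_pow] at hco
  simp at hco

lemma key3 (K : Type*) [Field K] (k : ℕ) (hk : 3 ≤ k) :
    (mV K k (tVel K k) : Module.End K (Vmod K k))
      ∉ Submodule.span K {B : Module.End K (Vmod K k) | ∃ f g, B = Dop (mV K k) f g} := by
  set t := tq K k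
  set W : Submodule K (Vmod K k) :=
    ((Ideal.span {t ^ 3}).restrictScalars K).comap (Vmod K k).subtype with hW
  intro hmem
  have hle : Submodule.span K {B : Module.End K (Vmod K k) | ∃ f g, B = Dop (mV K k) f g}
      ≤ W.comap (LinearMap.applyₗ (tVel K k)) := by
    rw [Submodule.span_le]
    rintro B ⟨f, g, rfl⟩
    obtain ⟨a, ha⟩ := Ideal.mem_span_singleton.mp f.2
    obtain ⟨b, hb⟩ := Ideal.mem_span_singleton.mp g.2
    simp only [Submodule.mem_comap, LinearMap.applyₗ_apply_apply, hW, Submodule.restrictScalars_mem]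
    rw [key1]
    show ((2:K) • (mV K k (mV K k f g) (tVel K k))).1 ∈ Ideal.span {t ^ 3}
    rw [Ideal.mem_span_singleton]
    have : ((2:K) • (mV K k (mV K k f g) (tVel K k))).1 = (2:K) • (f.1 * g.1 * t) := rfl
    rw [this]
    refine dvd_smul_of_dvd _ ⟨a * b, ?_⟩
    rw [ha, hb]; ring
  have := hle hmem
  simp only [Submodule.mem_comap, LinearMap.applyₗ_apply_apply, hW,
    Submodule.restrictScalars_mem] at this
  have h2 : (t * t : Aq K k) ∈ Ideal.span {t ^ 3} := this
  rw [Ideal.mem_span_singleton] at h2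
  exact not_dvd K k hk (by rwa [pow_two])

theorem stmt19 (K : Type*) [Field K] (h2 : (2 : K) ≠ 0) (h3 : (3 : K) ≠ 0)
    (k : ℕ) (hk : 3 ≤ k) :
    (∀ f g : Vmod K k,
      Dop (mV K k) f g = (2 : K) • (mV K k (mV K k f g) : Module.End K (Vmod K k))) ∧
    Submodule.span K {B : Module.End K (Vmod K k) | ∃ f g, B = Dop (mV K k) f g}
      < Submodule.span K {B : Module.End K (Vmod K k) | ∃ f, B = mV K k f} ∧
    (mV K k ⟨tq K k, show tq K k ∈ Ideal.span {tq K k} from Ideal.subset_span rfl⟩ : Module.End K (Vmod K k))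
      ∉ Submodule.span K {B : Module.End K (Vmod K k) | ∃ f g, B = Dop (mV K k) f g} := by
  refine ⟨key1 K k, ?_, key3 K k hk⟩
  rw [SetLike.lt_iff_le_and_exists]
  constructor
  · rw [Submodule.span_le]
    rintro B ⟨f, g, rfl⟩
    rw [key1]
    exact Submodule.smul_mem _ _ (Submodule.subset_span ⟨mV K k f g, rfl⟩)
  · exact ⟨mV K k (tVel K k), Submodule.subset_span ⟨tVel K k, rfl⟩, key3 K k hk⟩
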